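/- arXiv:2410.04117 — 4 statements merged into one kernel-verified Lean document; each statement's English description precedes it below -/
import Mathlib

section
/- Let n b : ℕ and a : Fin n → ℕ satisfy 0 < a i and a i ≤ b for every i : Fin n. Then there exists a finite set S : Finset (Fin n) such that ∑_{i ∈ S} a i ≤ b and min b (∑_{i} a i) ≤ 2 * ∑_{i ∈ S} a i. (This is the combinatorial core of the paper's proposition that MAX-UK, the maximization version of the unary 0-1 knapsack problem, is log-space approximable with approximation ratio at most 2.) -/
/-- Combinatorial core of the 2-approximation for MAX-UK: some feasible subset
attains at least half of the trivial upper bound `min b (∑ i, a i)`. -/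
theorem maxUK_half_approx (n b : ℕ) (a : Fin n → ℕ)
    (hpos : ∀ i : Fin n, 0 < a i) (hle : ∀ i : Fin n, a i ≤ b) :
    ∃ S : Finset (Fin n),
      (∑ i ∈ S, a i) ≤ b ∧ min b (∑ i, a i) ≤ 2 * ∑ i ∈ S, a i := by
  set F : Finset (Finset (Fin n)) :=
    (Finset.univ).filter (fun S => ∑ i ∈ S, a i ≤ b) with hF
  have hne : (∅ : Finset (Fin n)) ∈ F := by simp [hF]
  obtain ⟨S, hSF, hmax⟩ :=
    F.exists_max_image (fun S => ∑ i ∈ S, a i) ⟨∅, hne⟩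
  have hSb : ∑ i ∈ S, a i ≤ b := by simpa [hF] using hSF
  refine ⟨S, hSb, ?_⟩
  by_cases htot : (∑ i, a i) ≤ b
  · have huniv : (Finset.univ : Finset (Fin n)) ∈ F := by simp [hF, htot]
    have := hmax _ huniv
    calc min b (∑ i, a i) ≤ ∑ i, a i := min_le_right _ _
      _ ≤ ∑ i ∈ S, a i := this
      _ ≤ 2 * ∑ i ∈ S, a i := by omega
  · push_neg at htot
    have hSne : S ≠ Finset.univ := by
      rintro rfl; omega
    obtain ⟨j, hj⟩ : ∃ j, j ∉ S := by
      by_contra h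
      push_neg at h
      exact hSne (Finset.eq_univ_of_forall h)
    have hins : ¬ (∑ i ∈ insert j S, a i ≤ b) := by
      intro h
      have hmem : insert j S ∈ F := by simp [hF, h]
      have := hmax _ hmem
      rw [Finset.sum_insert hj] at this
      have := hpos j
      omega
    rw [Finset.sum_insert hj] at hins
    have hj1 : ({j} : Finset (Fin n)) ∈ F := by simp [hF, hle j]
    have := hmax _ hj1
    simp only [Finset.sum_singleton] at this
    have : min b (∑ i, a i) = b := min_eq_left htot.le
    omega
end

section
/- Let b : ℕ and let l : List ℕ be sorted in non-increasing order (List.Sorted (· ≥ ·) l) with every element x of l satisfying 0 < x and x ≤ b. Let g := l.foldl (fun s x => if s + x ≤ b then s + x else s) 0 be the value achieved by the greedy algorithm that scans l in order and adds an element whenever it does not overshoot b. Then (i) g ≤ b, (ii) min b l.sum ≤ 2 * g, and (iii) for every multiset m with m ≤ (l : Multiset ℕ) and m.sum ≤ b one has m.sum ≤ 2 * g; in particular the greedy solution is within a factor 2 of any feasible solution. -/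
/-!
Once greedy has packed the largest item it holds at least as much as any item still to come,
since the items arrive in non-increasing order. So if it ever rejects an item `x`, its load `s`
satisfies `b < s + x ≤ 2 * s`, and the final load exceeds `b / 2`; if it never rejects, it packs
everything. Either way twice the greedy value is at least `min b l.sum`, which bounds every
feasible sum.
-/

def knapsackStep (b s x : ℕ) : ℕ := if s + x ≤ b then s + x else s

section

variable {b : ℕ}

theorem le_foldl_knapsackStep (l : List ℕ) (s : ℕ) : s ≤ l.foldl (knapsackStep b) s := by
  induction l generalizing s with
  | nil => rfl
  | cons x t ih =>
    refine le_trans ?_ (ih _)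
    unfold knapsackStep
    split_ifs <;> omega

theorem foldl_knapsackStep_le (l : List ℕ) {s : ℕ} (hs : s ≤ b) :
    l.foldl (knapsackStep b) s ≤ b := by
  induction l generalizing s with
  | nil => exact hs
  | cons x t ih =>
    apply ih
    unfold knapsackStep
    split_ifs <;> omega

theorem min_le_two_mul_foldl_knapsackStep {l : List ℕ} (hsort : l.Pairwise (· ≥ ·)) {s : ℕ}
    (hs : s ≤ b) (hls : ∀ x ∈ l, x ≤ s) :
    min b (s + l.sum) ≤ 2 * l.foldl (knapsackStep b) s := by
  induction l generalizing s with
  | nil => simp only [List.sum_nil, List.foldl_nil]; omega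
  | cons x t ih =>
    obtain ⟨hxt, ht⟩ := List.pairwise_cons.mp hsort
    have hxs : x ≤ s := hls x List.mem_cons_self
    rw [List.foldl_cons, List.sum_cons]
    by_cases hfit : s + x ≤ b
    · have := ih ht hfit fun y hy => (hxt y hy).trans (Nat.le_add_left x s)
      rw [knapsackStep, if_pos hfit]
      omega
    · have := le_foldl_knapsackStep (b := b) t s
      rw [knapsackStep, if_neg hfit]
      omega

theorem min_sum_le_two_mul_foldl_knapsackStep {l : List ℕ} (hsort : l.Pairwise (· ≥ ·))
    (hle : ∀ x ∈ l, x ≤ b) : min b l.sum ≤ 2 * l.foldl (knapsackStep b) 0 := by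
  cases l with
  | nil => simp
  | cons x t =>
    obtain ⟨hxt, ht⟩ := List.pairwise_cons.mp hsort
    have hxb : x ≤ b := hle x List.mem_cons_self
    have := min_le_two_mul_foldl_knapsackStep ht hxb hxt
    rwa [List.foldl_cons, knapsackStep, if_pos (by omega), zero_add, List.sum_cons]

end

theorem Multiset.sum_le_sum_of_le {m n : Multiset ℕ} (h : m ≤ n) : m.sum ≤ n.sum := by
  obtain ⟨u, rfl⟩ := Multiset.le_iff_exists_add.mp h
  rw [Multiset.sum_add]
  exact Nat.le_add_right _ _

theorem greedy_knapsack_two_approx_general (b : ℕ) (l : List ℕ)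
    (hsort : List.Pairwise (· ≥ ·) l)
    (hle : ∀ x ∈ l, x ≤ b) :
    let g := l.foldl (fun s x => if s + x ≤ b then s + x else s) 0
    g ≤ b ∧ min b l.sum ≤ 2 * g ∧
      ∀ m : Multiset ℕ, m ≤ (l : Multiset ℕ) → m.sum ≤ b → m.sum ≤ 2 * g := by
  intro g
  have hmin : min b l.sum ≤ 2 * g := min_sum_le_two_mul_foldl_knapsackStep hsort hle
  refine ⟨foldl_knapsackStep_le l (Nat.zero_le b), hmin, fun m hm hmb => ?_⟩
  have : m.sum ≤ l.sum := Multiset.sum_coe l ▸ Multiset.sum_le_sum_of_le hm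
  omega

/-- Correctness and 2-approximation guarantee of the greedy algorithm for the
unary 0-1 knapsack maximization problem. -/
theorem greedy_knapsack_two_approx (b : ℕ) (l : List ℕ)
    (hsort : List.Pairwise (· ≥ ·) l)
    (hpos : ∀ x ∈ l, 0 < x) (hle : ∀ x ∈ l, x ≤ b) :
    let g := l.foldl (fun s x => if s + x ≤ b then s + x else s) 0
    g ≤ b ∧ min b l.sum ≤ 2 * g ∧
      ∀ m : Multiset ℕ, m ≤ (l : Multiset ℕ) → m.sum ≤ b → m.sum ≤ 2 * g :=
  greedy_knapsack_two_approx_general b l hsort hle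
end

section
/- Let α be a type. For every 2CNF formula φ over α there exists a 2CNF formula ψ over the type α ⊕ ℕ such that every clause of ψ has positive polarity (both of its literals carry the same sign, i.e., both are positive or both are negative), and φ is satisfiable if and only if ψ is satisfiable. (Hence every instance of 2SAT is correctly reduced to an instance of Polar⁽⁺⁾-2SAT.) -/
/-!
A clause `x ∨ y` whose literals have opposite signs `s ≠ t` is replaced by the two clauses
`x ∨ (z, s)` and `(z, t) ∨ y` over a fresh variable `z`; both are of a single sign, and since
`(z, s)` and `(z, t)` are complementary literals, resolving on `z` gives back `x ∨ y`.
Conversely, any assignment satisfying `x ∨ y` extends to `z` by making `(z, s)` true exactly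
when `x` is false. Clause number `i` of the formula uses `Sum.inr i` as its fresh variable.
-/

/-- Evaluation of a literal `(v, s)` under an assignment `f`. -/
def litEval {α : Type*} (f : α → Bool) (l : α × Bool) : Bool :=
  if l.2 then f l.1 else !(f l.1)

/-- An assignment satisfies a 2-clause if at least one of its literals is true. -/
def satClause2 {α : Type*} (f : α → Bool) (c : (α × Bool) × (α × Bool)) : Prop :=
  litEval f c.1 = true ∨ litEval f c.2 = true

/-- A 2CNF formula (a list of 2-clauses) is satisfiable if some assignment
satisfies all of its clauses. -/
def sat2CNF {α : Type*} (φ : List ((α × Bool) × (α × Bool))) : Prop :=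
  ∃ f : α → Bool, ∀ c ∈ φ, satClause2 f c

namespace TwoSat

variable {α : Type*}

theorem litEval_eq_true_iff (f : α → Bool) (l : α × Bool) : litEval f l = true ↔ f l.1 = l.2 := by
  cases h : l.2 <;> simp [litEval, h]

def polarizeClause (i : ℕ) (c : (α × Bool) × (α × Bool)) :
    List (((α ⊕ ℕ) × Bool) × ((α ⊕ ℕ) × Bool)) :=
  if c.1.2 = c.2.2 then [((.inl c.1.1, c.1.2), (.inl c.2.1, c.2.2))]
  else [((.inl c.1.1, c.1.2), (.inr i, c.1.2)), ((.inr i, c.2.2), (.inl c.2.1, c.2.2))]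

def polarize (φ : List ((α × Bool) × (α × Bool))) :
    List (((α ⊕ ℕ) × Bool) × ((α ⊕ ℕ) × Bool)) :=
  φ.zipIdx.flatMap fun p => polarizeClause p.2 p.1

def freshValue (f : α → Bool) (c : (α × Bool) × (α × Bool)) : Bool :=
  if litEval f c.1 then c.2.2 else c.1.2

theorem polarizeClause_sign_eq {i : ℕ} {c : (α × Bool) × (α × Bool)} :
    ∀ d ∈ polarizeClause i c, d.1.2 = d.2.2 := by
  unfold polarizeClause
  split_ifs with h <;> simp [h]

theorem polarize_sign_eq (φ : List ((α × Bool) × (α × Bool))) :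
    ∀ d ∈ polarize φ, d.1.2 = d.2.2 := by
  simp only [polarize, List.mem_flatMap]
  rintro d ⟨p, -, hd⟩
  exact polarizeClause_sign_eq d hd

theorem satClause2_of_polarizeClause {f : α → Bool} {g : ℕ → Bool} {i : ℕ}
    {c : (α × Bool) × (α × Bool)}
    (h : ∀ d ∈ polarizeClause i c, satClause2 (Sum.elim f g) d) : satClause2 f c := by
  unfold polarizeClause at h
  simp only [satClause2, litEval_eq_true_iff] at h ⊢
  split_ifs at h with hs
  · simpa using h
  · simp only [List.mem_cons, List.not_mem_nil, or_false, forall_eq_or_imp, forall_eq,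
      Sum.elim_inl, Sum.elim_inr] at h
    obtain ⟨h₁ | hz₁, hz₂ | h₂⟩ := h
    all_goals first | exact .inl ‹_› | exact .inr ‹_› | exact absurd (hz₁.symm.trans hz₂) hs

theorem polarizeClause_sat_of_satClause2 {f : α → Bool} {g : ℕ → Bool} {i : ℕ}
    {c : (α × Bool) × (α × Bool)} (hc : satClause2 f c) (hg : g i = freshValue f c) :
    ∀ d ∈ polarizeClause i c, satClause2 (Sum.elim f g) d := by
  unfold polarizeClause freshValue at *
  simp only [satClause2] at hc ⊢
  split_ifs at hg ⊢ with hs h₁ h₁ <;>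
    simp_all [litEval_eq_true_iff]

theorem sat2CNF_polarize_iff (φ : List ((α × Bool) × (α × Bool))) :
    sat2CNF (polarize φ) ↔ sat2CNF φ := by
  simp only [sat2CNF, polarize, List.mem_flatMap, forall_exists_index, and_imp]
  constructor
  · rintro ⟨h, hh⟩
    refine ⟨h ∘ Sum.inl, fun c hc => ?_⟩
    obtain ⟨i, hi⟩ := List.mem_iff_getElem?.mp hc
    have hmem : (c, i) ∈ φ.zipIdx := List.mk_mem_zipIdx_iff_getElem?.mpr hi
    have hsplit : h = Sum.elim (h ∘ Sum.inl) (h ∘ Sum.inr) := by ext (_ | _) <;> rfl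
    exact satClause2_of_polarizeClause fun d hd => hsplit ▸ hh d _ hmem hd
  · rintro ⟨f, hf⟩
    refine ⟨Sum.elim f fun i => (φ[i]?).elim false (freshValue f), ?_⟩
    rintro d ⟨c, i⟩ hmem hd
    have hi : φ[i]? = some c := List.mk_mem_zipIdx_iff_getElem?.mp hmem
    exact polarizeClause_sat_of_satClause2 (hf c (List.mem_of_getElem? hi)) (by simp [hi]) d hd

end TwoSat

/-- Every 2CNF formula over `α` is equisatisfiable with a positive-polarity
2CNF formula over `α ⊕ ℕ` (each clause has both literals of the same sign). -/
theorem twoSat_to_positive_polarity {α : Type*}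
    (φ : List ((α × Bool) × (α × Bool))) :
    ∃ ψ : List (((α ⊕ ℕ) × Bool) × ((α ⊕ ℕ) × Bool)),
      (∀ c ∈ ψ, c.1.2 = c.2.2) ∧ (sat2CNF φ ↔ sat2CNF ψ) :=
  ⟨TwoSat.polarize φ, TwoSat.polarize_sign_eq φ, (TwoSat.sat2CNF_polarize_iff φ).symm⟩
end

section
/- Let α be a finite type with decidable equality and let φ be a list of m 3-clauses over α (each 3-clause a triple of literals). Let T(φ) be the 2CNF formula over α ⊕ Fin m obtained by replacing, for each j, the j-th 3-clause (l₁, l₂, l₃) of φ by the ten 2-clauses (l₁,l₁), (l₂,l₂), (l₃,l₃), (w_j,w_j), (¬l₁,¬l₂), (¬l₂,¬l₃), (¬l₁,¬l₃), (l₁,¬w_j), (l₂,¬w_j), (l₃,¬w_j), where all original literals are lifted along Sum.inl, w_j denotes the positive literal of Sum.inr j, and ¬l flips the Boolean sign of the literal l. Then the maximum, over all assignments g : α ⊕ Fin m → Bool, of the number of 2-clauses of T(φ) satisfied by g (counted with multiplicity) equals 6·m plus the maximum, over all assignments f : α → Bool, of the number of 3-clauses of φ satisfied by f (counted with multiplicity).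 -/
/-- Negation of a literal: flip its Boolean sign. -/
def litNeg {α : Type*} (l : α × Bool) : α × Bool := (l.1, !l.2)

/-- Lift a literal over `α` to a literal over `α ⊕ β` along `Sum.inl`. -/
def litLift {α β : Type*} (l : α × Bool) : (α ⊕ β) × Bool := (Sum.inl l.1, l.2)

/-- An assignment satisfies a 2-clause if at least one literal is true. -/
def sat2 {α : Type*} (f : α → Bool) (c : (α × Bool) × (α × Bool)) : Bool :=
  litEval f c.1 || litEval f c.2

/-- An assignment satisfies a 3-clause if at least one literal is true. -/
def sat3 {α : Type*} (f : α → Bool)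
    (c : (α × Bool) × (α × Bool) × (α × Bool)) : Bool :=
  litEval f c.1 || litEval f c.2.1 || litEval f c.2.2

/-- Williams' ten-clause gadget for the `j`-th 3-clause, using the fresh
variable `Sum.inr j`. -/
def gadget {α : Type*} (m : ℕ) (c : (α × Bool) × (α × Bool) × (α × Bool))
    (j : Fin m) : List (((α ⊕ Fin m) × Bool) × ((α ⊕ Fin m) × Bool)) :=
  let l₁ : (α ⊕ Fin m) × Bool := litLift c.1
  let l₂ : (α ⊕ Fin m) × Bool := litLift c.2.1
  let l₃ : (α ⊕ Fin m) × Bool := litLift c.2.2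
  let w : (α ⊕ Fin m) × Bool := (Sum.inr j, true)
  [(l₁, l₁), (l₂, l₂), (l₃, l₃), (w, w),
   (litNeg l₁, litNeg l₂), (litNeg l₂, litNeg l₃), (litNeg l₁, litNeg l₃),
   (l₁, litNeg w), (l₂, litNeg w), (l₃, litNeg w)]

def cnt (a b c w : Bool) : ℕ :=
  (if a then 1 else 0) + (if b then 1 else 0) + (if c then 1 else 0) +
  (if w then 1 else 0) +
  (if !a || !b then 1 else 0) + (if !b || !c then 1 else 0) + (if !a || !c then 1 else 0) +
  (if a || !w then 1 else 0) + (if b || !w then 1 else 0) + (if c || !w then 1 else 0)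

lemma gadget_countP {α : Type*} (m : ℕ) (c : (α × Bool) × (α × Bool) × (α × Bool))
    (j : Fin m) (g : (α ⊕ Fin m) → Bool) :
    (gadget m c j).countP (fun x => sat2 g x) =
      cnt (litEval (fun x => g (Sum.inl x)) c.1)
          (litEval (fun x => g (Sum.inl x)) c.2.1)
          (litEval (fun x => g (Sum.inl x)) c.2.2) (g (Sum.inr j)) := by
  obtain ⟨⟨v1, s1⟩, ⟨v2, s2⟩, ⟨v3, s3⟩⟩ := c
  simp only [gadget, cnt, sat2, litEval, litNeg, litLift, List.countP_cons, List.countP_nil]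
  cases s1 <;> cases s2 <;> cases s3 <;> simp [Bool.or_comm] <;> ring

lemma cnt_le (a b c w : Bool) : cnt a b c w ≤ 6 + (if a || b || c then 1 else 0) := by
  cases a <;> cases b <;> cases c <;> cases w <;> decide

lemma cnt_eq (a b c : Bool) : cnt a b c (a && b && c) = 6 + (if a || b || c then 1 else 0) := by
  cases a <;> cases b <;> cases c <;> decide

lemma sum_six {β : Type*} (l : List β) (p : β → Bool) :
    (l.map fun x => 6 + if p x then 1 else 0).sum = 6 * l.length + l.countP p := by
  induction l with
  | nil => simp
  | cons x l ih => by_cases h : p x <;> simp [h, ih, List.countP_cons] <;> ring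

lemma countP_eq_sum {β : Type*} (l : List β) (p : β → Bool) :
    l.countP p = (l.map fun x => if p x then 1 else 0).sum := by
  induction l with
  | nil => simp
  | cons x l ih => by_cases h : p x <;> simp [List.countP_cons, h, ih, Nat.add_comm]

/-- MAX-3SAT to MAX-2SAT via Williams' gadget: the optimum of the transformed
2CNF instance equals `6 * m` plus the optimum of the original 3CNF instance. -/
theorem max3sat_to_max2sat {α : Type*} [Fintype α] [DecidableEq α] (m : ℕ)
    (φ : Fin m → (α × Bool) × (α × Bool) × (α × Bool)) :
    (Finset.univ.sup fun g : α ⊕ Fin m → Bool =>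
        (((List.finRange m).flatMap fun j => gadget m (φ j) j).countP
          fun c => sat2 g c))
      = 6 * m +
        (Finset.univ.sup fun f : α → Bool =>
          ((List.finRange m).countP fun j => sat3 f (φ j))) := by
  apply le_antisymm
  · apply Finset.sup_le
    intro g _
    rw [List.countP_flatMap]
    calc ((List.finRange m).map fun j => (gadget m (φ j) j).countP fun x => sat2 g x).sum
        ≤ ((List.finRange m).map fun j =>
            6 + (if sat3 (fun x => g (Sum.inl x)) (φ j) then 1 else 0)).sum := by
          apply List.sum_le_sum
          intro j hj
          rw [gadget_countP]
          exact cnt_le _ _ _ _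
      _ = 6 * m + ((List.finRange m).countP fun j => sat3 (fun x => g (Sum.inl x)) (φ j)) := by
          rw [sum_six, List.length_finRange]
      _ ≤ _ := by
          gcongr
          exact Finset.le_sup (f := fun f : α → Bool =>
            (List.finRange m).countP fun j => sat3 f (φ j)) (Finset.mem_univ _)
  · obtain ⟨f, -, hf⟩ := Finset.exists_mem_eq_sup Finset.univ
      (Finset.univ_nonempty) (fun f : α → Bool => (List.finRange m).countP fun j => sat3 f (φ j))
    rw [hf]
    set g : α ⊕ Fin m → Bool := Sum.elim f
      (fun j => litEval f (φ j).1 && litEval f (φ j).2.1 && litEval f (φ j).2.2) with hg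
    have : (((List.finRange m).flatMap fun j => gadget m (φ j) j).countP
          fun c => sat2 g c) = 6 * m + ((List.finRange m).countP fun j => sat3 f (φ j)) := by
      rw [List.countP_flatMap]
      have key : ∀ j : Fin m, ((gadget m (φ j) j).countP fun x => sat2 g x)
          = 6 + (if sat3 f (φ j) then 1 else 0) := by
        intro j
        rw [gadget_countP]
        have h1 : (fun x => g (Sum.inl x)) = f := rfl
        have h2 : g (Sum.inr j) = (litEval f (φ j).1 && litEval f (φ j).2.1 && litEval f (φ j).2.2) := rfl
        rw [h1, h2, cnt_eq]
        rfl
      simp only [Function.comp_def]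
      rw [funext key, sum_six, List.length_finRange]
    rw [← this]
    exact Finset.le_sup (f := fun g : α ⊕ Fin m → Bool =>
      ((List.finRange m).flatMap fun j => gadget m (φ j) j).countP fun c => sat2 g c)
      (Finset.mem_univ g)
end
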